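/- arXiv:1602.05208 — 2 statements merged into one kernel-verified Lean document; each statement's English description precedes it below -/
import Mathlib

section
/- Let n, u, q be positive natural numbers, g : Fin n → Fin u, X̃ a real u×q matrix, M a real q×q matrix, and define the real n×q matrix X by row i of X equals row g(i) of X̃. For y ∈ ℝⁿ define ỹ ∈ ℝᵘ by ỹ_t = Σ_{i : g(i) = t} y_i. Then for every i ∈ Fin n, the i-th entry of (X M Xᵀ) y equals the g(i)-th entry of (X̃ M X̃ᵀ) ỹ. -/
theorem fitted_values_from_reduced (n u q : ℕ)
    (hn : 0 < n) (hu : 0 < u) (hq : 0 < q)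
    (g : Fin n → Fin u) (Xt : Matrix (Fin u) (Fin q) ℝ)
    (M : Matrix (Fin q) (Fin q) ℝ)
    (X : Matrix (Fin n) (Fin q) ℝ) (hX : ∀ i j, X i j = Xt (g i) j)
    (y : Fin n → ℝ) (yt : Fin u → ℝ)
    (hyt : ∀ t, yt t = ∑ i ∈ Finset.univ.filter (fun i => g i = t), y i) :
    ∀ i : Fin n,
      (X * M * X.transpose).mulVec y i = (Xt * M * Xt.transpose).mulVec yt (g i) := by
  intro i
  have key : ∀ j, (X * M * X.transpose) i j = (Xt * M * Xt.transpose) (g i) (g j) := by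
    intro j
    simp [Matrix.mul_apply, Matrix.transpose_apply, hX]
  simp only [Matrix.mulVec, dotProduct, key, hyt, Finset.mul_sum]
  rw [← Finset.sum_fiberwise Finset.univ g (fun j => (Xt * M * Xt.transpose) (g i) (g j) * y j)]
  apply Finset.sum_congr rfl
  intro t _
  apply Finset.sum_congr rfl
  intro j hj
  simp only [Finset.mem_filter] at hj
  rw [hj.2]
end

section
/- Let n, u be positive natural numbers, g : Fin n → Fin u, y ∈ ℝⁿ, and S̃ a symmetric real u×u matrix. Define ỹ ∈ ℝᵘ by ỹ_t = Σ_{i : g(i) = t} y_i, let W be the u×u diagonal matrix with t-th diagonal entry w_t = card{i : g(i) = t}, and let ŷ = S̃ ỹ ∈ ℝᵘ. Then Σ_{t=1}^{u} Σ_{i : g(i) = t} (y_i − ŷ_t)² = ‖y‖² − 2 ỹᵀ S̃ ỹ + ỹᵀ S̃ W S̃ ỹ, where ‖y‖² = Σ_{i=1}^{n} y_i². -/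
open Matrix

theorem gcv_numerator_reduced (n u : ℕ) (hn : 0 < n) (hu : 0 < u)
    (g : Fin n → Fin u) (y : Fin n → ℝ)
    (St : Matrix (Fin u) (Fin u) ℝ) (hSt : St.IsSymm)
    (yt : Fin u → ℝ)
    (hyt : ∀ t, yt t = ∑ i ∈ Finset.univ.filter (fun i => g i = t), y i)
    (W : Matrix (Fin u) (Fin u) ℝ)
    (hW : W = Matrix.diagonal fun t =>
      ((Finset.univ.filter (fun i => g i = t)).card : ℝ))
    (yhat : Fin u → ℝ) (hyhat : yhat = St.mulVec yt) :
    ∑ t, ∑ i ∈ Finset.univ.filter (fun i => g i = t), (y i - yhat t) ^ 2 =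
      (∑ i, (y i) ^ 2) - 2 * (yt ⬝ᵥ St.mulVec yt) +
        yt ⬝ᵥ (St * W * St).mulVec yt := by
  have hvec : St.vecMul yt = yhat := by
    rw [hyhat, ← Matrix.mulVec_transpose, hSt.eq]
  have h3 : yt ⬝ᵥ (St * W * St).mulVec yt
      = ∑ t, ((Finset.univ.filter (fun i => g i = t)).card : ℝ) * yhat t ^ 2 := by
    rw [← Matrix.mulVec_mulVec, ← Matrix.mulVec_mulVec, Matrix.dotProduct_mulVec, hvec,
      ← hyhat, hW]
    simp [Matrix.mulVec_diagonal, dotProduct, mul_comm, mul_assoc, sq]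
  have h2 : yt ⬝ᵥ St.mulVec yt = ∑ t, yt t * yhat t := by
    rw [hyhat]; rfl
  rw [h2, h3]
  have hLHS : ∀ t : Fin u,
      ∑ i ∈ Finset.univ.filter (fun i => g i = t), (y i - yhat t) ^ 2
      = (∑ i ∈ Finset.univ.filter (fun i => g i = t), y i ^ 2)
        - 2 * (yt t * yhat t)
        + ((Finset.univ.filter (fun i => g i = t)).card : ℝ) * yhat t ^ 2 := by
    intro t
    rw [hyt t]
    simp only [sub_sq, Finset.sum_add_distrib, Finset.sum_sub_distrib,
      Finset.sum_const, nsmul_eq_mul]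
    have h : ∑ x ∈ Finset.filter (fun i => g i = t) Finset.univ, 2 * y x * yhat t
        = 2 * ((∑ i ∈ Finset.filter (fun i => g i = t) Finset.univ, y i) * yhat t) := by
      rw [Finset.sum_mul, Finset.mul_sum]
      exact Finset.sum_congr rfl fun i _ => by ring
    rw [h]
  simp only [hLHS, Finset.sum_add_distrib, Finset.sum_sub_distrib, ← Finset.mul_sum]
  rw [Finset.sum_fiberwise]
end
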